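/- Δ_max fails the triangle inequality: there exist density matrices ρ, σ, τ on ℂ² with Δ_max(ρ,σ) > Δ_max(ρ,τ) + Δ_max(τ,σ). Concretely, for non-parallel pure states Δ_max = 1, while for θ close to 0, Δ_max(ψ,τ) + Δ_max(φ,τ) ≤ 2√(1 − 1/(cos(θ/2)+sin(θ/2))²) < 1 with ψ, φ, τ as in the F_min counterexample. -/

import Mathlib

/-!
Take the pure states `ψ ∝ (2, 1)`, `φ ∝ (2, -1)` and `τ = diag (2/3, 1/3)`. The linear functionals
`A ↦ ⟪(2, 1), A (2, 1)⟫` and `A ↦ ⟪(2, -1), A (2, -1)⟫` are at most `5` on states, attain it at `ψ`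
and `φ` respectively, and never both at once. In a reverse test for `(ψ, φ)` every state `R x` with
`p x > 0` attains the first maximum and every one with `q x > 0` the second, so `p` and `q` have
disjoint supports and `Δ_max(ψ, φ) = 1`. On the other hand
`τ = 5/9 ψ + 4/9 |-⟩⟨-| = 5/9 φ + 4/9 |+⟩⟨+|`, and these decompositions are reverse tests showing
`Δ_max(ψ, τ), Δ_max(τ, φ) ≤ 4/9`.
-/

open Matrix BigOperators
open scoped ComplexOrder Classical

noncomputable def msqrt {n : Type*} [Fintype n] [DecidableEq n]
    (A : Matrix n n ℂ) : Matrix n n ℂ :=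
  if h : A.PosSemidef then (h.1.eigenvectorUnitary : Matrix n n ℂ) *
    diagonal ((↑) ∘ Real.sqrt ∘ h.1.eigenvalues) * star (h.1.eigenvectorUnitary : Matrix n n ℂ)
  else 0

noncomputable def gm {n : Type*} [Fintype n] [DecidableEq n]
    (A B : Matrix n n ℂ) : Matrix n n ℂ :=
  msqrt A * msqrt ((msqrt A)⁻¹ * B * (msqrt A)⁻¹) * msqrt A

def IsDensity {n : Type*} [Fintype n] (ρ : Matrix n n ℂ) : Prop :=
  ρ.PosSemidef ∧ ρ.trace = 1

structure IsReverseTest {d m : ℕ} (ρ σ : Matrix (Fin d) (Fin d) ℂ)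
    (R : Fin m → Matrix (Fin d) (Fin d) ℂ) (p q : Fin m → ℝ) : Prop where
  states : ∀ x, IsDensity (R x)
  p_nonneg : ∀ x, 0 ≤ p x
  q_nonneg : ∀ x, 0 ≤ q x
  p_sum : ∑ x, p x = 1
  q_sum : ∑ x, q x = 1
  rho_eq : ∑ x, (p x : ℂ) • R x = ρ
  sigma_eq : ∑ x, (q x : ℂ) • R x = σ

noncomputable def Fmin {d : ℕ} (ρ σ : Matrix (Fin d) (Fin d) ℂ) : ℝ :=
  sSup {r : ℝ | ∃ (m : ℕ) (R : Fin m → Matrix (Fin d) (Fin d) ℂ) (p q : Fin m → ℝ),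
    IsReverseTest ρ σ R p q ∧ r = ∑ x, Real.sqrt (p x * q x)}

noncomputable def Dmax {d : ℕ} (ρ σ : Matrix (Fin d) (Fin d) ℂ) : ℝ :=
  sInf {r : ℝ | ∃ (m : ℕ) (R : Fin m → Matrix (Fin d) (Fin d) ℂ) (p q : Fin m → ℝ),
    IsReverseTest ρ σ R p q ∧ r = (∑ x, |p x - q x|) / 2}

noncomputable def choiMatrix {d e : ℕ}
    (Λ : Matrix (Fin d) (Fin d) ℂ →ₗ[ℂ] Matrix (Fin e) (Fin e) ℂ) :
    Matrix (Fin d × Fin e) (Fin d × Fin e) ℂ :=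
  Matrix.of fun pr qr => Λ (Matrix.single pr.1 qr.1 1) pr.2 qr.2

def IsCPTP {d e : ℕ}
    (Λ : Matrix (Fin d) (Fin d) ℂ →ₗ[ℂ] Matrix (Fin e) (Fin e) ℂ) : Prop :=
  (choiMatrix Λ).PosSemidef ∧ ∀ A, (Λ A).trace = A.trace

noncomputable def mcfc {n : Type*} [Fintype n] [DecidableEq n]
    (f : ℝ → ℝ) (A : Matrix n n ℂ) : Matrix n n ℂ :=
  if h : A.IsHermitian then h.cfc f else 0

def IsOperatorMonotoneOnNonneg (f : ℝ → ℝ) : Prop :=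
  ∀ (d : ℕ) (A B : Matrix (Fin d) (Fin d) ℂ), A.PosSemidef → B.PosSemidef →
    (B - A).PosSemidef → (mcfc f B - mcfc f A).PosSemidef

noncomputable def traceNorm {n : Type*} [Fintype n] [DecidableEq n]
    (A : Matrix n n ℂ) : ℝ :=
  ((msqrt (Aᴴ * A)).trace).re

theorem Finset.sum_abs_sub_eq_two {ι : Type*} {s : Finset ι} {p q : ι → ℝ}
    (hp : ∀ x ∈ s, 0 ≤ p x) (hq : ∀ x ∈ s, 0 ≤ q x) (hp₁ : ∑ x ∈ s, p x = 1)
    (hq₁ : ∑ x ∈ s, q x = 1) (hpq : ∀ x ∈ s, p x = 0 ∨ q x = 0) :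
    ∑ x ∈ s, |p x - q x| = 2 := by
  have habs : ∀ x ∈ s, |p x - q x| = p x + q x := by
    intro x hx
    rcases hpq x hx with h | h
    · rw [h, zero_sub, abs_neg, abs_of_nonneg (hq x hx), zero_add]
    · rw [h, sub_zero, abs_of_nonneg (hp x hx), add_zero]
  rw [Finset.sum_congr rfl habs, Finset.sum_add_distrib, hp₁, hq₁]
  norm_num

theorem Finset.eq_zero_or_eq_of_sum_mul_eq {ι : Type*} {s : Finset ι} {p f : ι → ℝ} {c : ℝ}
    (hp : ∀ x ∈ s, 0 ≤ p x) (hp₁ : ∑ x ∈ s, p x = 1) (hf : ∀ x ∈ s, f x ≤ c)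
    (hpf : ∑ x ∈ s, p x * f x = c) : ∀ x ∈ s, p x = 0 ∨ f x = c := by
  have hgap : ∑ x ∈ s, p x * (c - f x) = 0 := by
    simp only [mul_sub, Finset.sum_sub_distrib, ← Finset.sum_mul, hp₁, hpf]
    ring
  intro x hx
  have := (Finset.sum_eq_zero_iff_of_nonneg fun y hy ↦
    mul_nonneg (hp y hy) (sub_nonneg.2 (hf y hy))).1 hgap x hx
  rcases mul_eq_zero.1 this with h | h
  · exact .inl h
  · exact .inr (sub_eq_zero.1 h).symm

section ReverseTest

variable {d m : ℕ} {ρ σ : Matrix (Fin d) (Fin d) ℂ} {R : Fin m → Matrix (Fin d) (Fin d) ℂ}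
  {p q : Fin m → ℝ}

theorem IsReverseTest.symm (h : IsReverseTest ρ σ R p q) : IsReverseTest σ ρ R q p :=
  ⟨h.states, h.q_nonneg, h.p_nonneg, h.q_sum, h.p_sum, h.sigma_eq, h.rho_eq⟩

theorem Dmax_comm (ρ σ : Matrix (Fin d) (Fin d) ℂ) : Dmax ρ σ = Dmax σ ρ := by
  have key : ∀ ρ σ : Matrix (Fin d) (Fin d) ℂ, ∀ r, (∃ (m : ℕ) (R : Fin m → Matrix (Fin d) (Fin d) ℂ)
      (p q : Fin m → ℝ), IsReverseTest ρ σ R p q ∧ r = (∑ x, |p x - q x|) / 2) →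
      ∃ (m : ℕ) (R : Fin m → Matrix (Fin d) (Fin d) ℂ) (p q : Fin m → ℝ),
        IsReverseTest σ ρ R p q ∧ r = (∑ x, |p x - q x|) / 2 := by
    rintro ρ σ r ⟨m, R, p, q, h, rfl⟩
    exact ⟨m, R, q, p, h.symm, by simp only [abs_sub_comm]⟩
  unfold Dmax
  congr 1
  ext r
  exact ⟨key ρ σ r, key σ ρ r⟩

theorem Dmax_le (h : IsReverseTest ρ σ R p q) : Dmax ρ σ ≤ (∑ x, |p x - q x|) / 2 := by
  refine csInf_le ⟨0, ?_⟩ ⟨m, R, p, q, h, rfl⟩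
  rintro r ⟨m, R, p, q, -, rfl⟩
  positivity

theorem isReverseTest_mix {ρ χ : Matrix (Fin d) (Fin d) ℂ} (hρ : IsDensity ρ) (hχ : IsDensity χ)
    {t : ℝ} (ht₀ : 0 ≤ t) (ht₁ : t ≤ 1) :
    IsReverseTest ρ ((t : ℂ) • ρ + ((1 - t : ℝ) : ℂ) • χ) ![ρ, χ] ![1, 0] ![t, 1 - t] where
  states x := by fin_cases x; exacts [hρ, hχ]
  p_nonneg x := by fin_cases x <;> simp
  q_nonneg x := by fin_cases x <;> simp [ht₀, ht₁]
  p_sum := by simp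
  q_sum := by simp
  rho_eq := by simp
  sigma_eq := by rw [Fin.sum_univ_two]; rfl

theorem Dmax_mix_le {ρ χ : Matrix (Fin d) (Fin d) ℂ} (hρ : IsDensity ρ) (hχ : IsDensity χ)
    {t : ℝ} (ht₀ : 0 ≤ t) (ht₁ : t ≤ 1) :
    Dmax ρ ((t : ℂ) • ρ + ((1 - t : ℝ) : ℂ) • χ) ≤ 1 - t := by
  refine (Dmax_le (isReverseTest_mix hρ hχ ht₀ ht₁)).trans_eq ?_
  rw [Fin.sum_univ_two]
  simp only [Matrix.cons_val_zero, Matrix.cons_val_one]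
  rw [abs_of_nonneg (by linarith), abs_of_nonpos (by linarith)]
  ring

end ReverseTest

section ExposedStates

variable {d m : ℕ} {ρ σ : Matrix (Fin d) (Fin d) ℂ} {R : Fin m → Matrix (Fin d) (Fin d) ℂ}
  {p q : Fin m → ℝ}

theorem LinearMap.map_sum_ofReal_smul (f : Matrix (Fin d) (Fin d) ℂ →ₗ[ℝ] ℝ) :
    f (∑ x, (p x : ℂ) • R x) = ∑ x, p x * f (R x) := by
  simp [Complex.coe_smul]

theorem IsReverseTest.eq_zero_or_eq_zero_of_exposed (h : IsReverseTest ρ σ R p q)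
    (f g : Matrix (Fin d) (Fin d) ℂ →ₗ[ℝ] ℝ) {a b : ℝ}
    (hf : ∀ A, IsDensity A → f A ≤ a) (hg : ∀ A, IsDensity A → g A ≤ b)
    (hfρ : f ρ = a) (hgσ : g σ = b) (hfg : ∀ A, IsDensity A → f A = a → g A ≠ b) (x : Fin m) :
    p x = 0 ∨ q x = 0 := by
  have hp := Finset.eq_zero_or_eq_of_sum_mul_eq (fun x _ ↦ h.p_nonneg x) h.p_sum
    (fun x _ ↦ hf _ (h.states x)) (by rw [← f.map_sum_ofReal_smul, h.rho_eq, hfρ]) x (by simp)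
  have hq := Finset.eq_zero_or_eq_of_sum_mul_eq (fun x _ ↦ h.q_nonneg x) h.q_sum
    (fun x _ ↦ hg _ (h.states x)) (by rw [← g.map_sum_ofReal_smul, h.sigma_eq, hgσ]) x (by simp)
  rcases hp with hp | hp
  · exact .inl hp
  rcases hq with hq | hq
  · exact .inr hq
  exact absurd hq (hfg _ (h.states x) hp)

theorem one_le_Dmax_of_exposed (hρ : IsDensity ρ) (hσ : IsDensity σ)
    (f g : Matrix (Fin d) (Fin d) ℂ →ₗ[ℝ] ℝ) {a b : ℝ}
    (hf : ∀ A, IsDensity A → f A ≤ a) (hg : ∀ A, IsDensity A → g A ≤ b)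
    (hfρ : f ρ = a) (hgσ : g σ = b) (hfg : ∀ A, IsDensity A → f A = a → g A ≠ b) :
    1 ≤ Dmax ρ σ := by
  have htriv := isReverseTest_mix hρ hσ le_rfl zero_le_one
  rw [show ((0 : ℝ) : ℂ) • ρ + ((1 - 0 : ℝ) : ℂ) • σ = σ by simp] at htriv
  refine le_csInf ⟨_, _, _, _, _, htriv, rfl⟩ ?_
  rintro r ⟨m, R, p, q, h, rfl⟩
  rw [Finset.sum_abs_sub_eq_two (fun x _ ↦ h.p_nonneg x) (fun x _ ↦ h.q_nonneg x) h.p_sum h.q_sum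
    fun x _ ↦ h.eq_zero_or_eq_zero_of_exposed f g hf hg hfρ hgσ hfg x]
  norm_num

end ExposedStates

section QubitStates

/-- `A ↦ Re ⟪v, A v⟫` for the real vector `v = (x, y)`. -/
noncomputable def vecExpect (x y : ℝ) : Matrix (Fin 2) (Fin 2) ℂ →ₗ[ℝ] ℝ where
  toFun A := x ^ 2 * (A 0 0).re + x * y * ((A 0 1).re + (A 1 0).re) + y ^ 2 * (A 1 1).re
  map_add' A B := by simp only [Matrix.add_apply, Complex.add_re]; ring
  map_smul' c A := by simp only [Matrix.smul_apply, Complex.real_smul, Complex.re_ofReal_mul,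
    RingHom.id_apply, smul_eq_mul]; ring

theorem vecExpect_apply (x y : ℝ) (A : Matrix (Fin 2) (Fin 2) ℂ) :
    vecExpect x y A =
      x ^ 2 * (A 0 0).re + x * y * ((A 0 1).re + (A 1 0).re) + y ^ 2 * (A 1 1).re :=
  rfl

theorem Matrix.PosSemidef.vecExpect_nonneg {A : Matrix (Fin 2) (Fin 2) ℂ} (hA : A.PosSemidef)
    (x y : ℝ) : 0 ≤ vecExpect x y A := by
  have := Complex.re_le_re (hA.dotProduct_mulVec_nonneg ![(x : ℂ), y])
  simp only [Complex.zero_re, dotProduct, Pi.star_apply, RCLike.star_def, mulVec, Fin.sum_univ_two,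
    Fin.isValue, cons_val_zero, cons_val_one, cons_val_fin_one, Complex.conj_ofReal, Complex.add_re,
    Complex.mul_re, Complex.ofReal_re, Complex.ofReal_im, mul_zero, sub_zero] at this
  rw [vecExpect_apply]
  nlinarith

theorem vecExpect_add_vecExpect_perp (x y : ℝ) (A : Matrix (Fin 2) (Fin 2) ℂ) :
    vecExpect x y A + vecExpect y (-x) A = (x ^ 2 + y ^ 2) * A.trace.re := by
  simp only [vecExpect_apply, Matrix.trace_fin_two, Complex.add_re]
  ring

theorem IsDensity.vecExpect_le {A : Matrix (Fin 2) (Fin 2) ℂ} (hA : IsDensity A) (x y : ℝ) :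
    vecExpect x y A ≤ x ^ 2 + y ^ 2 := by
  have := vecExpect_add_vecExpect_perp x y A
  rw [hA.2, Complex.one_re, mul_one] at this
  linarith [hA.1.vecExpect_nonneg y (-x)]

theorem IsDensity.vecExpect_neg_ne {A : Matrix (Fin 2) (Fin 2) ℂ} (hA : IsDensity A) {x y : ℝ}
    (hx : x ≠ 0) (hy : y ≠ 0) (h : vecExpect x y A = x ^ 2 + y ^ 2) :
    vecExpect x (-y) A ≠ x ^ 2 + (-y) ^ 2 := by
  intro h'
  have ha := hA.1.vecExpect_nonneg 1 0
  have hd := hA.1.vecExpect_nonneg 0 1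
  have htr := congrArg Complex.re hA.2
  simp only [vecExpect_apply, Matrix.trace_fin_two, Complex.add_re, Complex.one_re] at *
  have hsum : x ^ 2 * (A 1 1).re + y ^ 2 * (A 0 0).re = 0 := by
    linear_combination (x ^ 2 + y ^ 2) * htr - (h + h') / 2
  have hxd : x ^ 2 * (A 1 1).re = 0 := by
    nlinarith [mul_nonneg (sq_nonneg x) hd, mul_nonneg (sq_nonneg y) ha]
  have hya : y ^ 2 * (A 0 0).re = 0 := by linarith
  simp only [mul_eq_zero, pow_eq_zero_iff two_ne_zero, hx, hy, false_or] at hxd hya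
  linarith

theorem quadForm_nonneg {a b d : ℝ} (ha : 0 ≤ a) (hd : 0 ≤ d) (hb : b ^ 2 ≤ a * d) (s t : ℝ) :
    0 ≤ a * s ^ 2 + 2 * b * s * t + d * t ^ 2 := by
  rcases ha.eq_or_lt with rfl | ha
  · obtain rfl : b = 0 := by nlinarith
    simp only [zero_mul, mul_zero, zero_add]
    positivity
  · refine nonneg_of_mul_nonneg_right ?_ ha
    nlinarith [sq_nonneg (a * s + b * t), mul_nonneg (sub_nonneg.2 hb) (sq_nonneg t)]

noncomputable def realSymm2 (a b d : ℝ) : Matrix (Fin 2) (Fin 2) ℂ :=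
  !![(a : ℂ), (b : ℂ); (b : ℂ), (d : ℂ)]

theorem realSymm2_posSemidef {a b d : ℝ} (ha : 0 ≤ a) (hd : 0 ≤ d) (hb : b ^ 2 ≤ a * d) :
    (realSymm2 a b d).PosSemidef := by
  refine posSemidef_iff_dotProduct_mulVec.2 ⟨?_, fun v ↦ Complex.nonneg_iff.2 ⟨?_, ?_⟩⟩
  · ext i j
    fin_cases i <;> fin_cases j <;> simp [realSymm2]
  · have hre := quadForm_nonneg ha hd hb (v 0).re (v 1).re
    have him := quadForm_nonneg ha hd hb (v 0).im (v 1).im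
    simp only [dotProduct, Pi.star_apply, RCLike.star_def, mulVec, realSymm2, of_apply, cons_val',
      cons_val_fin_one, Fin.sum_univ_two, Fin.isValue, cons_val_zero, cons_val_one, Complex.add_re,
      Complex.mul_re, Complex.conj_re, Complex.ofReal_re, Complex.ofReal_im, zero_mul, sub_zero,
      Complex.conj_im, Complex.add_im, Complex.mul_im, add_zero, neg_mul, sub_neg_eq_add]
    nlinarith
  · simp [realSymm2, dotProduct, mulVec, Fin.sum_univ_two]
    ring

theorem isDensity_realSymm2 {a b d : ℝ} (ha : 0 ≤ a) (hd : 0 ≤ d) (hb : b ^ 2 ≤ a * d)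
    (htr : a + d = 1) : IsDensity (realSymm2 a b d) :=
  ⟨realSymm2_posSemidef ha hd hb, by
    simpa [realSymm2, trace_fin_two] using congrArg ((↑) : ℝ → ℂ) htr⟩

end QubitStates

theorem stmt18 : ∃ ρ σ τ : Matrix (Fin 2) (Fin 2) ℂ,
    IsDensity ρ ∧ IsDensity σ ∧ IsDensity τ ∧
    Dmax ρ τ + Dmax τ σ < Dmax ρ σ := by
  have hρ : IsDensity (realSymm2 (4/5) (2/5) (1/5)) := by
    apply isDensity_realSymm2 <;> norm_num
  have hσ : IsDensity (realSymm2 (4/5) (-2/5) (1/5)) := by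
    apply isDensity_realSymm2 <;> norm_num
  have hτ : IsDensity (realSymm2 (2/3) 0 (1/3)) := by
    apply isDensity_realSymm2 <;> norm_num
  have hχ₁ : IsDensity (realSymm2 (1/2) (-1/2) (1/2)) := by
    apply isDensity_realSymm2 <;> norm_num
  have hχ₂ : IsDensity (realSymm2 (1/2) (1/2) (1/2)) := by
    apply isDensity_realSymm2 <;> norm_num
  have hτρ : realSymm2 (2/3) 0 (1/3) = ((5/9 : ℝ) : ℂ) • realSymm2 (4/5) (2/5) (1/5) +
      ((1 - 5/9 : ℝ) : ℂ) • realSymm2 (1/2) (-1/2) (1/2) := by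
    ext i j; fin_cases i <;> fin_cases j <;> simp [realSymm2] <;> norm_num
  have hτσ : realSymm2 (2/3) 0 (1/3) = ((5/9 : ℝ) : ℂ) • realSymm2 (4/5) (-2/5) (1/5) +
      ((1 - 5/9 : ℝ) : ℂ) • realSymm2 (1/2) (1/2) (1/2) := by
    ext i j; fin_cases i <;> fin_cases j <;> simp [realSymm2] <;> norm_num
  have hρτ := Dmax_mix_le hρ hχ₁ (t := 5/9) (by norm_num) (by norm_num)
  have hστ := Dmax_mix_le hσ hχ₂ (t := 5/9) (by norm_num) (by norm_num)
  rw [← hτρ] at hρτ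
  rw [← hτσ, Dmax_comm] at hστ
  have hρσ : 1 ≤ Dmax (realSymm2 (4/5) (2/5) (1/5)) (realSymm2 (4/5) (-2/5) (1/5)) :=
    one_le_Dmax_of_exposed hρ hσ (vecExpect 2 1) (vecExpect 2 (-1))
      (fun A hA ↦ hA.vecExpect_le 2 1) (fun A hA ↦ hA.vecExpect_le 2 (-1))
      (by norm_num [vecExpect_apply, realSymm2])
      (by norm_num [vecExpect_apply, realSymm2])
      (fun A hA h ↦ hA.vecExpect_neg_ne two_ne_zero one_ne_zero h)
  exact ⟨_, _, _, hρ, hσ, hτ, by linarith⟩
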